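/- The 1-form Ω = (x dy − y dx)/(x⁴ + y⁴) on ℂ² has simple poles along its (reduced) polar divisor x⁴ + y⁴ = 0 and dΩ also has simple poles there (Ω is logarithmic), but its pullback under the blow-up chart σ(x,t) = (x, tx) equals dt/(x²(1 + t⁴)), which has a pole of order exactly 2 along the exceptional divisor x = 0. -/

import Mathlib

/-!
Over `ℂ[y]` the polynomial `x⁴ + y⁴` is monic in `x` and separable over `ℂ(y)`, because `4` and
`y⁴` are nonzero; by Gauss's lemma it is therefore squarefree. For `Ω = (x dy − y dx)/f` with
`f = xⁿ + yⁿ`, Euler's relation `x ∂ₓf + y ∂ᵧf = n f` gives `dΩ = (2 − n)/f dx ∧ dy`. In the chart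
`y = t x`, the form `x dy − y dx` pulls back to `x² dt` and `f(x, t x) = x⁴ (1 + t⁴)`.
-/

open Polynomial in
theorem Polynomial.IsPrimitive.squarefree_of_squarefree_map {R S : Type*} [CommRing R]
    [CommRing S] [IsDomain S] {φ : R →+* S} (hinj : Function.Injective φ) {f : R[X]}
    (hf : f.IsPrimitive) (h : Squarefree (f.map φ)) : Squarefree f := fun q hq =>
  ((isPrimitive_of_dvd hf (dvd_of_mul_left_dvd hq)).isUnit_iff_isUnit_map_of_injective hinj).mpr
    (h _ (by simpa using Polynomial.map_dvd φ hq))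

open Polynomial in
theorem Polynomial.squarefree_X_pow_add_C {R : Type*} [CommRing R] [IsDomain R] {n : ℕ}
    (hn : (n : R) ≠ 0) {a : R} (ha : a ≠ 0) : Squarefree (X ^ n + C a : R[X]) := by
  have hinj := IsFractionRing.injective R (FractionRing R)
  refine (monic_X_pow_add_C a (by rintro rfl; simp at hn)).isPrimitive
    |>.squarefree_of_squarefree_map hinj ?_
  have hsep := separable_X_pow_sub_C (-algebraMap R (FractionRing R) a)
    (by exact_mod_cast (map_ne_zero_iff _ hinj).mpr hn)
    (by simpa using (map_ne_zero_iff _ hinj).mpr ha)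
  simpa using hsep.squarefree

theorem MulEquiv.squarefree_map_iff {M N : Type*} [Monoid M] [Monoid N] (e : M ≃* N) {x : M} :
    Squarefree (e x) ↔ Squarefree x := by
  refine ⟨fun h y hy => ?_, fun h y hy => ?_⟩
  · simpa using (h (e y) (by simpa using map_dvd e hy)).map e.symm
  · simpa using (h (e.symm y) (by simpa using map_dvd e.symm hy)).map e

theorem MvPolynomial.squarefree_X_zero_pow_add_X_one_pow {R : Type*} [CommRing R] [IsDomain R]
    {n : ℕ} (hn : (n : R) ≠ 0) : Squarefree (X 0 ^ n + X 1 ^ n : MvPolynomial (Fin 2) R) := by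
  rw [← (finSuccEquiv R 1).toMulEquiv.squarefree_map_iff]
  have hX : finSuccEquiv R 1 (X 0 ^ n + X 1 ^ n) = .X ^ n + .C (X 0 ^ n) := by
    rw [map_add, map_pow, map_pow, ← Fin.succ_zero_eq_one, finSuccEquiv_X_zero,
      finSuccEquiv_X_succ, ← map_pow]
  refine hX ▸ Polynomial.squarefree_X_pow_add_C ?_ (pow_ne_zero _ (X_ne_zero 0))
  exact_mod_cast (map_ne_zero_iff _ (C_injective (Fin 1) R)).mpr hn

section

variable {𝕜 F : Type*} [NontriviallyNormedField 𝕜] [NormedAddCommGroup F] [NormedSpace 𝕜 F]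
  {f : 𝕜 × 𝕜 → F} {x y : 𝕜}

theorem DifferentiableAt.fderiv_apply_one_zero (hf : DifferentiableAt 𝕜 f (x, y)) :
    fderiv 𝕜 f (x, y) (1, 0) = deriv (fun s => f (s, y)) x :=
  (hf.hasFDerivAt.comp_hasDerivAt x ((hasDerivAt_id x).prodMk (hasDerivAt_const x y))).deriv.symm

theorem DifferentiableAt.fderiv_apply_zero_one (hf : DifferentiableAt 𝕜 f (x, y)) :
    fderiv 𝕜 f (x, y) (0, 1) = deriv (fun s => f (x, s)) y :=
  (hf.hasFDerivAt.comp_hasDerivAt y ((hasDerivAt_const y x).prodMk (hasDerivAt_id y))).deriv.symm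

theorem hasDerivAt_div_pow_add_const (n : ℕ) {c : 𝕜} (h : x ^ n + c ≠ 0) :
    HasDerivAt (fun s => s / (s ^ n + c)) ((x ^ n + c - n * x ^ n) / (x ^ n + c) ^ 2) x := by
  have hpow : x * (n * x ^ (n - 1)) = n * x ^ n := by
    rcases eq_or_ne n 0 with rfl | hn
    · simp
    · rw [mul_left_comm, mul_pow_sub_one hn]
  simpa [hpow, Pi.div_def] using (hasDerivAt_id' x).div ((hasDerivAt_pow n x).add_const c) h

theorem pow_add_pow_mul_curl (n : ℕ) (h : x ^ n + y ^ n ≠ 0) :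
    (x ^ n + y ^ n) *
      (fderiv 𝕜 (fun p : 𝕜 × 𝕜 => p.1 / (p.1 ^ n + p.2 ^ n)) (x, y) (1, 0)
        - fderiv 𝕜 (fun p : 𝕜 × 𝕜 => -p.2 / (p.1 ^ n + p.2 ^ n)) (x, y) (0, 1)) = 2 - n := by
  have h' : y ^ n + x ^ n ≠ 0 := by rwa [add_comm]
  rw [DifferentiableAt.fderiv_apply_one_zero (by fun_prop (disch := exact h)),
    DifferentiableAt.fderiv_apply_zero_one (by fun_prop (disch := exact h)),
    (hasDerivAt_div_pow_add_const n h).deriv]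
  simp_rw [neg_div, add_comm (x ^ n)]
  rw [(hasDerivAt_div_pow_add_const n h').fun_neg.deriv]
  field_simp
  ring

end

/-- the logarithmic form Ω = (x dy − y dx)/(x⁴+y⁴), with components
Ωx = −y/(x⁴+y⁴), Ωy = x/(x⁴+y⁴): Ω and dΩ have simple poles along x⁴+y⁴ = 0
(here x⁴+y⁴ is squarefree, and dΩ = (∂x Ωy − ∂y Ωx) dx∧dy satisfies
(x⁴+y⁴)·(∂x Ωy − ∂y Ωx) = −2), while the pullback by the blow-up chart σ(x,t)=(x,tx)
is σ*Ω = dt/(x²(1+t⁴)): its dx-coefficient Ωx∘σ + t·Ωy∘σ vanishes, its dt-coefficient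
x·Ωy∘σ equals 1/(x²(1+t⁴)), and x²·(x·Ωy∘σ) = 1/(1+t⁴) ≠ 0, so the pole along the
exceptional divisor x = 0 has order exactly 2. -/
theorem stmt_3 :
    let Ωx : ℂ → ℂ → ℂ := fun x y => -y / (x ^ 4 + y ^ 4)
    let Ωy : ℂ → ℂ → ℂ := fun x y => x / (x ^ 4 + y ^ 4)
    Squarefree (MvPolynomial.X 0 ^ 4 + MvPolynomial.X 1 ^ 4 : MvPolynomial (Fin 2) ℂ) ∧
    (∀ x y : ℂ, x ^ 4 + y ^ 4 ≠ 0 →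
      (x ^ 4 + y ^ 4) * Ωx x y = -y ∧ (x ^ 4 + y ^ 4) * Ωy x y = x) ∧
    (∀ x y : ℂ, x ^ 4 + y ^ 4 ≠ 0 →
      (x ^ 4 + y ^ 4) *
        (fderiv ℂ (fun p : ℂ × ℂ => Ωy p.1 p.2) (x, y) (1, 0)
          - fderiv ℂ (fun p : ℂ × ℂ => Ωx p.1 p.2) (x, y) (0, 1)) = -2) ∧
    (∀ x t : ℂ, x ≠ 0 → 1 + t ^ 4 ≠ 0 →
      Ωx x (t * x) + t * Ωy x (t * x) = 0 ∧
      x * Ωy x (t * x) = 1 / (x ^ 2 * (1 + t ^ 4)) ∧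
      x ^ 2 * (x * Ωy x (t * x)) = 1 / (1 + t ^ 4) ∧
      (1 : ℂ) / (1 + t ^ 4) ≠ 0) := by
  intro Ωx Ωy
  refine ⟨MvPolynomial.squarefree_X_zero_pow_add_X_one_pow (by norm_num),
    fun x y h => ⟨mul_div_cancel₀ _ h, mul_div_cancel₀ _ h⟩, fun x y h => ?_,
    fun x t hx ht => ?_⟩
  · rw [pow_add_pow_mul_curl 4 h]
    norm_num
  · have hσ : x ^ 4 + (t * x) ^ 4 = x ^ 4 * (1 + t ^ 4) := by ring
    simp only [Ωx, Ωy, hσ]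
    exact ⟨by ring, by field_simp, by field_simp, one_div_ne_zero ht⟩
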